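/- arXiv:1806.07235 — 2 statements merged into one kernel-verified Lean document; each statement's English description precedes it below -/
import Mathlib

section
/- Let M = [[M₁₁, M₁₂],[M₂₁, M₂₂]] be a symmetric positive definite block matrix with M₂₁ = M₁₂ᵀ. Define C_M⁻¹ := min{η > 0 : η ∈ σ(I − M₂₂^{-1/2} M₁₂ᵀ M₁₁⁻¹ M₁₂ M₂₂^{-1/2})}. Then for all x = [x₁; x₂], C_M · xᵀMx ≥ x₂ᵀ M₂₂ x₂. -/
open Matrix

open scoped ComplexOrder in
/-- The positive semidefinite square root of a positive semidefinite matrix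
(the definition of `Matrix.PosSemidef.sqrt` in the older Mathlib, since removed). -/
noncomputable def Matrix.PosSemidef.sqrt {n 𝕜 : Type*} [Fintype n] [DecidableEq n] [RCLike 𝕜]
    {A : Matrix n n 𝕜} (hA : A.PosSemidef) : Matrix n n 𝕜 :=
  hA.1.eigenvectorUnitary.1 * diagonal ((↑) ∘ (√·) ∘ hA.1.eigenvalues) *
  (star hA.1.eigenvectorUnitary : Matrix n n 𝕜)

lemma sqrt_mul_self_aux {n : ℕ} {A : Matrix (Fin n) (Fin n) ℝ} (hA : A.PosSemidef) :
    Matrix.PosSemidef.sqrt hA * Matrix.PosSemidef.sqrt hA = A := by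
  unfold Matrix.PosSemidef.sqrt
  have hU : (star hA.1.eigenvectorUnitary : Matrix (Fin n) (Fin n) ℝ) *
      hA.1.eigenvectorUnitary.1 = 1 := Unitary.coe_star_mul_self _
  have hD : diagonal ((RCLike.ofReal ∘ (√·) ∘ hA.1.eigenvalues : Fin n → ℝ)) *
      diagonal ((RCLike.ofReal ∘ (√·) ∘ hA.1.eigenvalues : Fin n → ℝ)) =
      diagonal (RCLike.ofReal ∘ hA.1.eigenvalues : Fin n → ℝ) := by
    rw [diagonal_mul_diagonal]; congr 1; funext i
    simp [Real.mul_self_sqrt (hA.eigenvalues_nonneg i)]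
  calc _ = hA.1.eigenvectorUnitary.1 * (diagonal ((RCLike.ofReal ∘ (√·) ∘ hA.1.eigenvalues : Fin n → ℝ)) *
        ((star hA.1.eigenvectorUnitary : Matrix (Fin n) (Fin n) ℝ) * hA.1.eigenvectorUnitary.1) *
        diagonal ((RCLike.ofReal ∘ (√·) ∘ hA.1.eigenvalues : Fin n → ℝ))) *
        (star hA.1.eigenvectorUnitary : Matrix (Fin n) (Fin n) ℝ) := by
          simp only [Matrix.mul_assoc]
    _ = A := by
      rw [hU, Matrix.mul_one, hD]
      conv_rhs => rw [hA.1.spectral_theorem]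
      rfl

lemma posSemidef_sqrt_aux {n : ℕ} {A : Matrix (Fin n) (Fin n) ℝ} (hA : A.PosSemidef) :
    (Matrix.PosSemidef.sqrt hA).PosSemidef := by
  unfold Matrix.PosSemidef.sqrt
  have := (PosSemidef.diagonal (d := ((RCLike.ofReal ∘ (√·) ∘ hA.1.eigenvalues : Fin n → ℝ)))
    (fun i => by simp [Real.sqrt_nonneg])).mul_mul_conjTranspose_same
      (hA.1.eigenvectorUnitary.1)
  simpa [Unitary.coe_star, Matrix.star_eq_conjTranspose] using this

lemma congrPD {n : ℕ} {A B : Matrix (Fin n) (Fin n) ℝ} (hA : A.PosDef)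
    (hB : B.IsHermitian) (hBu : IsUnit B) : (B * A * B).PosDef := by
  have hBt : Bᵀ = B := by rw [← conjTranspose_eq_transpose_of_trivial]; exact hB
  refine Matrix.PosDef.of_dotProduct_mulVec_pos ?_ ?_
  · unfold Matrix.IsHermitian
    rw [conjTranspose_mul, conjTranspose_mul, hB.eq, hA.1.eq, Matrix.mul_assoc]
  · intro y hy
    have hz : B *ᵥ y ≠ 0 :=
      (Matrix.mulVec_injective_iff_isUnit.mpr hBu).ne_iff' (by simp) |>.2 hy
    have := hA.dotProduct_mulVec_pos hz
    simpa [star_trivial, dotProduct_mulVec, ← mulVec_transpose, hBt, mulVec_mulVec,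
      Matrix.mul_assoc] using this

lemma rayleigh_lb {n : ℕ} {A : Matrix (Fin n) (Fin n) ℝ} (hA : A.IsHermitian) (m : ℝ)
    (h : ∀ i, m ≤ hA.eigenvalues i) (v : Fin n → ℝ) :
    m * (v ⬝ᵥ v) ≤ v ⬝ᵥ A *ᵥ v := by
  have hT : (A - m • 1).IsHermitian := by
    unfold Matrix.IsHermitian
    rw [conjTranspose_sub, hA.eq, conjTranspose_smul, star_trivial, conjTranspose_one]
  have halg : A - m • 1 = A - algebraMap ℝ (Matrix (Fin n) (Fin n) ℝ) m := by
    rw [Algebra.algebraMap_eq_smul_one]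
  have hTpsd : (A - m • 1).PosSemidef := by
    have key : ∀ μ : ℝ, μ ∈ spectrum ℝ (A - m • 1) → 0 ≤ μ := by
      intro μ hmem
      rw [halg, ← spectrum.sub_singleton_eq, hA.spectrum_real_eq_range_eigenvalues (𝕜 := ℝ)] at hmem
      obtain ⟨a, ⟨j, rfl⟩, b, hb, hab⟩ := hmem
      rw [Set.mem_singleton_iff] at hb
      subst hb
      simp only at hab
      rw [← hab]
      have := h j
      linarith
    apply hT.posSemidef_iff_eigenvalues_nonneg.mpr
    exact fun i => key _ (hT.eigenvalues_mem_spectrum_real (𝕜 := ℝ) i)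
  have := hTpsd.dotProduct_mulVec_nonneg v
  simp only [star_trivial, sub_mulVec, smul_mulVec, one_mulVec, dotProduct_sub,
    dotProduct_smul, smul_eq_mul] at this
  linarith

/-- Block restriction estimate: for a symmetric positive definite block matrix `M`,
`C_M · xᵀ M x ≥ x₂ᵀ M₂₂ x₂` where
`C_M⁻¹ = min {η > 0 : η ∈ σ(I − M₂₂^{-1/2} M₁₂ᵀ M₁₁⁻¹ M₁₂ M₂₂^{-1/2})}`. -/
theorem stmt1 (n₁ n₂ : ℕ)
    (M₁₁ : Matrix (Fin n₁) (Fin n₁) ℝ) (M₁₂ : Matrix (Fin n₁) (Fin n₂) ℝ)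
    (M₂₂ : Matrix (Fin n₂) (Fin n₂) ℝ)
    (M : Matrix (Fin n₁ ⊕ Fin n₂) (Fin n₁ ⊕ Fin n₂) ℝ)
    (hM : M = Matrix.fromBlocks M₁₁ M₁₂ M₁₂ᵀ M₂₂)
    (hMsymm : M.IsSymm) (hMpd : M.PosDef)
    (hM₂₂pd : M₂₂.PosDef)
    (C : ℝ)
    (hC : C⁻¹ = sInf {η : ℝ | 0 < η ∧
      η ∈ spectrum ℝ
        ((1 : Matrix (Fin n₂) (Fin n₂) ℝ) -
          (Matrix.PosSemidef.sqrt hM₂₂pd.posSemidef)⁻¹ * M₁₂ᵀ * M₁₁⁻¹ * M₁₂ * (Matrix.PosSemidef.sqrt hM₂₂pd.posSemidef)⁻¹)}) :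
    ∀ x : (Fin n₁ ⊕ Fin n₂) → ℝ,
      C * (x ⬝ᵥ M.mulVec x) ≥ (x ∘ Sum.inr) ⬝ᵥ M₂₂.mulVec (x ∘ Sum.inr) := by
  set R := Matrix.PosSemidef.sqrt hM₂₂pd.posSemidef with hRdef
  have hRps : R.PosSemidef := posSemidef_sqrt_aux hM₂₂pd.posSemidef
  have hRR : R * R = M₂₂ := sqrt_mul_self_aux hM₂₂pd.posSemidef
  have hRdet : IsUnit R.det := by
    have h2 : R.det * R.det = M₂₂.det := by rw [← det_mul, hRR]
    have hd := hM₂₂pd.det_pos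
    refine isUnit_iff_ne_zero.mpr fun h0 => ?_
    rw [h0, mul_zero] at h2
    exact hd.ne h2
  have hRu : IsUnit R := (isUnit_iff_isUnit_det _).2 hRdet
  have hRiu : IsUnit R⁻¹ := (Matrix.isUnit_nonsing_inv_iff).2 hRu
  have hRih : (R⁻¹).IsHermitian := hRps.1.inv
  -- M₁₁ is positive definite
  have hM₁₁h : M₁₁.IsHermitian := by
    have := hMpd.1
    rw [hM] at this
    exact (isHermitian_fromBlocks_iff.1 this).1
  have hM₁₁pd : M₁₁.PosDef := by
    refine .of_dotProduct_mulVec_pos hM₁₁h fun y hy => ?_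
    have hx0 : Sum.elim y (0 : Fin n₂ → ℝ) ≠ 0 := fun h => hy (funext fun i => congrFun h (Sum.inl i))
    have := hMpd.dotProduct_mulVec_pos hx0
    rw [hM] at this
    simpa [star_trivial, fromBlocks_mulVec, sumElim_dotProduct_sumElim] using this
  haveI : Invertible M₁₁ := hM₁₁pd.isUnit.invertible
  have hBH : M₁₂ᴴ = M₁₂ᵀ := conjTranspose_eq_transpose_of_trivial _
  have hMB : M = fromBlocks M₁₁ M₁₂ M₁₂ᴴ M₂₂ := by rw [hM, hBH]
  set Sc := M₂₂ - M₁₂ᵀ * M₁₁⁻¹ * M₁₂ with hScdef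
  have hSch : Sc.IsHermitian := by
    have := (IsHermitian.fromBlocks₁₁ M₁₂ M₂₂ hM₁₁h).1 (hMB ▸ hMpd.1)
    rwa [hBH] at this
  have hScpd : Sc.PosDef := by
    refine .of_dotProduct_mulVec_pos hSch fun y hy => ?_
    set x₁ : Fin n₁ → ℝ := -((M₁₁⁻¹ * M₁₂) *ᵥ y) with hx₁
    have hx0 : Sum.elim x₁ y ≠ 0 := fun h => hy (funext fun i => congrFun h (Sum.inr i))
    have hpos := hMpd.dotProduct_mulVec_pos hx0
    rw [hMB, dotProduct_mulVec] at hpos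
    have heq := schur_complement_eq₁₁ (A := M₁₁) M₁₂ M₂₂ x₁ y hM₁₁h
    rw [heq] at hpos
    have hz : x₁ + (M₁₁⁻¹ * M₁₂) *ᵥ y = 0 := by simp [hx₁]
    rw [hz] at hpos
    simp only [star_zero, zero_vecMul, zero_dotProduct, zero_add] at hpos
    rwa [hBH, star_trivial, ← dotProduct_mulVec] at hpos
  set S := (1 : Matrix (Fin n₂) (Fin n₂) ℝ) - R⁻¹ * M₁₂ᵀ * M₁₁⁻¹ * M₁₂ * R⁻¹ with hSdef
  have e1 : R⁻¹ * M₂₂ * R⁻¹ = 1 := by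
    rw [← hRR, ← Matrix.mul_assoc, Matrix.nonsing_inv_mul _ hRdet, Matrix.one_mul,
      Matrix.mul_nonsing_inv _ hRdet]
  have hSeq : S = R⁻¹ * Sc * R⁻¹ := by
    rw [hSdef, hScdef, Matrix.mul_sub, Matrix.sub_mul, e1]
    congr 1
    simp [Matrix.mul_assoc]
  have hSpd : S.PosDef := hSeq ▸ congrPD hScpd hRih hRiu
  have hRS : R * S * R = Sc := by
    rw [hSeq, ← Matrix.mul_assoc, ← Matrix.mul_assoc, Matrix.mul_nonsing_inv _ hRdet,
      Matrix.one_mul, Matrix.mul_assoc, Matrix.nonsing_inv_mul _ hRdet, Matrix.mul_one]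
  have hset : {η : ℝ | 0 < η ∧ η ∈ spectrum ℝ S} = Set.range hSpd.1.eigenvalues := by
    ext η
    constructor
    · rintro ⟨-, hmem⟩
      rwa [hSpd.1.spectrum_real_eq_range_eigenvalues (𝕜 := ℝ)] at hmem
    · rintro ⟨i, rfl⟩
      exact ⟨hSpd.eigenvalues_pos i, by
        rw [hSpd.1.spectrum_real_eq_range_eigenvalues (𝕜 := ℝ)]; exact ⟨i, rfl⟩⟩
  rw [hset] at hC
  intro x
  rcases Nat.eq_zero_or_pos n₂ with h0 | hposn
  · subst h0
    have hC0 : C = 0 := by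
      have hre : Set.range hSpd.1.eigenvalues = (∅ : Set ℝ) := Set.range_eq_empty _
      rw [hre, Real.sInf_empty] at hC
      exact inv_eq_zero.mp hC
    simp [hC0, dotProduct]
  · haveI : Nonempty (Fin n₂) := Fin.pos_iff_nonempty.mp hposn
    set m := sInf (Set.range hSpd.1.eigenvalues) with hm
    have hmmem : m ∈ Set.range hSpd.1.eigenvalues :=
      Set.Nonempty.csInf_mem (Set.range_nonempty _) (Set.finite_range _)
    have hmpos : 0 < m := by
      obtain ⟨i, hi⟩ := hmmem
      rw [← hi]
      exact hSpd.eigenvalues_pos i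
    have hmle : ∀ i, m ≤ hSpd.1.eigenvalues i := fun i =>
      csInf_le (Set.finite_range _).bddBelow ⟨i, rfl⟩
    have hCm : C = m⁻¹ := inv_eq_iff_eq_inv.mp hC
    have hCpos : 0 < C := hCm ▸ inv_pos.mpr hmpos
    have hCm1 : C * m = 1 := by rw [hCm]; field_simp
    set y := x ∘ Sum.inr with hy
    set v := R *ᵥ y with hv
    have hRsym : Rᵀ = R := by rw [← conjTranspose_eq_transpose_of_trivial]; exact hRps.1
    have key : ∀ (A : Matrix (Fin n₂) (Fin n₂) ℝ), v ⬝ᵥ A *ᵥ v = y ⬝ᵥ (R * A * R) *ᵥ y := by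
      intro A
      have h1 : (R * A * R) *ᵥ y = R *ᵥ (A *ᵥ v) := by rw [hv, mulVec_mulVec, mulVec_mulVec]
      rw [h1, dotProduct_mulVec y R, ← mulVec_transpose, hRsym, ← hv]
    have f1 : y ⬝ᵥ M₂₂ *ᵥ y = v ⬝ᵥ v := by
      have h := key 1
      rw [Matrix.mul_one, hRR] at h
      simpa using h.symm
    have f2 : v ⬝ᵥ S *ᵥ v = y ⬝ᵥ Sc *ᵥ y := by rw [key S, hRS]
    have f3 : m * (y ⬝ᵥ M₂₂ *ᵥ y) ≤ y ⬝ᵥ Sc *ᵥ y := by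
      rw [f1, ← f2]
      exact rayleigh_lb hSpd.1 m hmle v
    have f4 : y ⬝ᵥ Sc *ᵥ y ≤ x ⬝ᵥ M *ᵥ x := by
      have hx : Sum.elim (x ∘ Sum.inl) y = x := Sum.elim_comp_inl_inr x
      have heq := schur_complement_eq₁₁ (A := M₁₁) M₁₂ M₂₂ (x ∘ Sum.inl) y hM₁₁h
      simp only [star_trivial] at heq
      have hMx : x ⬝ᵥ M *ᵥ x =
          (x ∘ Sum.inl + (M₁₁⁻¹ * M₁₂) *ᵥ y) ᵥ* M₁₁ ⬝ᵥ (x ∘ Sum.inl + (M₁₁⁻¹ * M₁₂) *ᵥ y) +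
            y ᵥ* (M₂₂ - M₁₂ᴴ * M₁₁⁻¹ * M₁₂) ⬝ᵥ y := by
        conv_lhs => rw [← hx]
        rw [hMB, dotProduct_mulVec]
        exact heq
      have hterm1 : 0 ≤ (x ∘ Sum.inl + (M₁₁⁻¹ * M₁₂) *ᵥ y) ᵥ* M₁₁ ⬝ᵥ
          (x ∘ Sum.inl + (M₁₁⁻¹ * M₁₂) *ᵥ y) := by
        rw [← dotProduct_mulVec]
        simpa [star_trivial] using hM₁₁pd.posSemidef.dotProduct_mulVec_nonneg (x ∘ Sum.inl + (M₁₁⁻¹ * M₁₂) *ᵥ y)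
      have hterm2 : y ᵥ* (M₂₂ - M₁₂ᴴ * M₁₁⁻¹ * M₁₂) ⬝ᵥ y = y ⬝ᵥ Sc *ᵥ y := by
        rw [hBH, ← dotProduct_mulVec, hScdef]
      rw [hMx, hterm2]
      linarith
    have chain : m * (y ⬝ᵥ M₂₂ *ᵥ y) ≤ x ⬝ᵥ M *ᵥ x := le_trans f3 f4
    calc y ⬝ᵥ M₂₂ *ᵥ y = C * (m * (y ⬝ᵥ M₂₂ *ᵥ y)) := by rw [← mul_assoc, hCm1, one_mul]
      _ ≤ C * (x ⬝ᵥ M *ᵥ x) := mul_le_mul_of_nonneg_left chain hCpos.le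
end

section
/- Let N ≥ 1, Λ > 0, γ > 1, Λ̃ = γΛ, and let ξ₁,…,ξ_N be the Chebyshev points of (0,Λ). For λ ∈ (0,Λ) and real numbers μ_k > Λ̃ with coefficients β_k satisfying Σ_k (β_k/(μ_k−λ))² ≤ C_M, define c_k(λ) = 1/(μ_k−λ) − Σ_j ℓ_j(λ)/(μ_k−ξ_j). Then Σ_k μ_k c_k(λ)² β_k² ≤ 4 C_M γ² (γΛ − λ)/(γ−1)² · (1/(4(γ−1)))^{2N}. -/
open Finset

open Polynomial Polynomial.Chebyshev

theorem chebAux : ∀ n : ℕ, (T ℝ n).natDegree ≤ n ∧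
    (T ℝ n).coeff n = if n = 0 then 1 else 2 ^ (n - 1)
  | 0 => by simp
  | 1 => by simp
  | (n + 2) => by
    obtain ⟨h1d, h1c⟩ := chebAux (n + 1)
    obtain ⟨h0d, h0c⟩ := chebAux n
    have hT : T ℝ ((n : ℤ) + 2) = 2 * X * T ℝ ((n : ℤ) + 1) - T ℝ (n : ℤ) :=
      T_add_two ℝ n
    have hcast : ((n + 2 : ℕ) : ℤ) = (n : ℤ) + 2 := by push_cast; ring
    have hcast1 : ((n + 1 : ℕ) : ℤ) = (n : ℤ) + 1 := by push_cast; ring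
    rw [hcast, hT]
    have h2 : (2 : ℝ[X]) = Polynomial.C 2 := (map_ofNat Polynomial.C 2).symm
    constructor
    · refine (natDegree_sub_le _ _).trans (max_le ?_ (h0d.trans (by omega)))
      calc (2 * X * T ℝ ((n:ℤ)+1)).natDegree ≤ (2 * X : ℝ[X]).natDegree + (T ℝ ((n:ℤ)+1)).natDegree :=
            natDegree_mul_le
        _ ≤ 1 + (n + 1) := by
            refine add_le_add ?_ (by rw [← hcast1]; exact h1d)
            refine natDegree_mul_le.trans ?_
            simp [h2]
        _ = n + 2 := by ring
    · rw [coeff_sub, mul_assoc, h2, coeff_C_mul]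
      have hx : (X * T ℝ ((n:ℤ)+1)).coeff (n + 2) = (T ℝ ((n:ℤ)+1)).coeff (n + 1) :=
        coeff_X_mul _ _
      rw [hx, ← hcast1, h1c, coeff_eq_zero_of_natDegree_lt (lt_of_le_of_lt h0d (by omega))]
      simp [pow_succ]
      ring

theorem chebFactor (N : ℕ) (hN : 1 ≤ N) :
    T ℝ N = C ((2:ℝ) ^ (N - 1)) *
      ∏ j : Fin N, (X - C (Real.cos ((2 * (j:ℝ) + 1) / (2 * N) * Real.pi))) := by
  classical
  set θ : Fin N → ℝ := fun j => (2 * (j:ℝ) + 1) / (2 * N) * Real.pi with hθ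
  have hNR : (0:ℝ) < N := by exact_mod_cast hN
  have hπ := Real.pi_pos
  have hθmem : ∀ j, θ j ∈ Set.Icc 0 Real.pi := by
    intro j
    constructor
    · apply mul_nonneg _ hπ.le
      positivity
    · rw [hθ]
      have h1 : (2 * (j:ℝ) + 1) / (2 * N) ≤ 1 := by
        rw [div_le_one (by positivity)]
        have : (j:ℝ) + 1 ≤ N := by exact_mod_cast j.2
        linarith
      nlinarith [h1, hπ.le]
  have hθinj : Function.Injective θ := by
    intro i j h
    simp only [hθ] at h
    have h1 : (2 * (i:ℝ) + 1) / (2 * N) = (2 * (j:ℝ) + 1) / (2 * N) :=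
      mul_right_cancel₀ (ne_of_gt hπ) h
    have hne : (2 * (N:ℝ))⁻¹ ≠ 0 := by positivity
    rw [div_eq_mul_inv, div_eq_mul_inv] at h1
    have h2 : 2 * (i:ℝ) + 1 = 2 * (j:ℝ) + 1 := mul_right_cancel₀ hne h1
    have h3 : ((i:ℕ):ℝ) = ((j:ℕ):ℝ) := by linarith
    exact Fin.ext (by exact_mod_cast h3)
  have hcosinj : Function.Injective fun j => Real.cos (θ j) := by
    intro i j h
    exact hθinj (Real.injOn_cos (hθmem i) (hθmem j) h)
  set P : ℝ[X] := ∏ j : Fin N, (X - C (Real.cos (θ j))) with hP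
  have hPmonic : P.Monic := monic_prod_of_monic _ _ fun j _ => monic_X_sub_C _
  have hPdeg : P.natDegree = N := by
    rw [hP, natDegree_prod_of_monic _ _ fun j _ => monic_X_sub_C _]
    simp
  have hD : T ℝ N - C ((2:ℝ) ^ (N - 1)) * P = 0 := by
    set D := T ℝ N - C ((2:ℝ) ^ (N - 1)) * P with hDdef
    by_cases hD0 : D = 0
    · exact hD0
    refine eq_zero_of_natDegree_lt_card_of_eval_eq_zero D hcosinj ?_ ?_
    · intro j
      have hTe : (T ℝ N).eval (Real.cos (θ j)) = Real.cos ((N:ℝ) * θ j) := by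
        have := T_real_cos (θ j) (N : ℤ)
        push_cast at this ⊢
        exact this
      have hang : (N:ℝ) * θ j = (j:ℝ) * Real.pi + Real.pi / 2 := by
        rw [hθ]
        field_simp
      have hcos0 : Real.cos ((N:ℝ) * θ j) = 0 := by
        rw [hang, Real.cos_add, Real.cos_pi_div_two, Real.sin_pi_div_two]
        have : Real.sin ((j:ℝ) * Real.pi) = 0 := Real.sin_nat_mul_pi j
        rw [this]; ring
      have hPe : P.eval (Real.cos (θ j)) = 0 := by
        rw [hP, eval_prod]
        exact Finset.prod_eq_zero (Finset.mem_univ j) (by simp)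
      simp [hDdef, hTe, hcos0, hPe]
    · rw [Fintype.card_fin, natDegree_lt_iff_degree_lt hD0, degree_lt_iff_coeff_zero]
      intro m hm
      have hTd := (chebAux N).1
      have hTc := (chebAux N).2
      rcases eq_or_lt_of_le hm with heq | hlt
      · rw [hDdef, coeff_sub, coeff_C_mul, ← heq, hTc, if_neg (by omega)]
        have hPc : P.coeff N = 1 := by
          have := hPmonic.coeff_natDegree
          rwa [hPdeg] at this
        rw [hPc]; ring
      · rw [hDdef, coeff_sub, coeff_C_mul,
          coeff_eq_zero_of_natDegree_lt (lt_of_le_of_lt hTd hlt),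
          coeff_eq_zero_of_natDegree_lt (by omega : P.natDegree < m)]
        ring
  have := sub_eq_zero.mp hD
  exact this

theorem interpError (N : ℕ) (hN : 1 ≤ N) (ξ : Fin N → ℝ) (hinj : Function.Injective ξ)
    (a lam : ℝ) (ha : ∀ j, ξ j ≠ a) (hla : lam ≠ a) :
    1 / (a - lam) - ∑ j : Fin N,
        (∏ i ∈ Finset.univ.erase j, (lam - ξ i) / (ξ j - ξ i)) / (a - ξ j)
      = (∏ j, (lam - ξ j)) / ((a - lam) * ∏ j, (a - ξ j)) := by
  classical
  set ω : ℝ[X] := ∏ j : Fin N, (X - C (ξ j)) with hω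
  have hωe : ∀ t, ω.eval t = ∏ j, (t - ξ j) := by
    intro t; rw [hω, eval_prod]; simp
  have hωdeg : ω.natDegree = N := by
    rw [hω, natDegree_prod_of_monic _ _ fun j _ => monic_X_sub_C _]; simp
  have hW : ω.eval a ≠ 0 := by
    rw [hωe]
    exact Finset.prod_ne_zero_iff.mpr fun j _ => sub_ne_zero.mpr (Ne.symm (ha j))
  obtain ⟨r, hr⟩ := X_sub_C_dvd_sub_C_eval (a := a) (p := ω)
  have hne : ω - C (ω.eval a) ≠ 0 := by
    intro h0
    have h1 : (ω - C (ω.eval a)).natDegree = N := by rw [natDegree_sub_C, hωdeg]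
    rw [h0, natDegree_zero] at h1
    omega
  have hr0 : r ≠ 0 := by
    rintro rfl
    rw [mul_zero] at hr
    exact hne hr
  have hdegnat : 1 + r.natDegree = N := by
    have h1 : (ω - C (ω.eval a)).natDegree = N := by rw [natDegree_sub_C, hωdeg]
    rw [hr, natDegree_mul (X_sub_C_ne_zero a) hr0, natDegree_X_sub_C] at h1
    exact h1
  have hreval : ∀ t, (∏ j, (t - ξ j)) - ω.eval a = (t - a) * r.eval t := by
    intro t
    have h2 := congrArg (eval t) hr
    simpa [hωe t] using h2
  set f : ℝ[X] := C (ω.eval a)⁻¹ * r with hf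
  have hcard : ((Finset.univ : Finset (Fin N)).card : WithBot ℕ) = (N : WithBot ℕ) := by
    simp
  have hfdeg : f.degree < (Finset.univ : Finset (Fin N)).card := by
    rw [hcard]
    calc f.degree ≤ r.degree := by
          rw [hf]
          refine (degree_mul_le _ _).trans ?_
          have : (C (ω.eval a)⁻¹).degree ≤ 0 := degree_C_le
          calc (C (ω.eval a)⁻¹).degree + r.degree ≤ 0 + r.degree := by
                exact add_le_add_left this _
            _ = r.degree := by rw [zero_add]
      _ ≤ (r.natDegree : WithBot ℕ) := degree_le_natDegree
      _ < (N : WithBot ℕ) := by exact_mod_cast (by omega : r.natDegree < N)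
  have hfeval : ∀ j : Fin N, f.eval (ξ j) = (a - ξ j)⁻¹ := by
    intro j
    have h1 := hreval (ξ j)
    have h2 : (∏ i, (ξ j - ξ i)) = 0 :=
      Finset.prod_eq_zero (Finset.mem_univ j) (by simp)
    rw [h2, zero_sub] at h1
    have haj : ξ j - a ≠ 0 := sub_ne_zero.mpr (ha j)
    have h3 : r.eval (ξ j) = ω.eval a / (a - ξ j) := by
      rw [eq_div_iff (by intro h; apply haj; linarith [sub_eq_zero.mp h])]
      have : (a - ξ j) = -(ξ j - a) := by ring
      rw [this]
      linear_combination h1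
    rw [hf, eval_mul, eval_C, h3]
    field_simp
  have hfi : f = Lagrange.interpolate Finset.univ ξ (fun j => (a - ξ j)⁻¹) :=
    Lagrange.eq_interpolate_of_eval_eq _ hinj.injOn hfdeg (fun j _ => hfeval j)
  have hsum : (∑ j : Fin N,
      (∏ i ∈ Finset.univ.erase j, (lam - ξ i) / (ξ j - ξ i)) / (a - ξ j)) = f.eval lam := by
    rw [hfi, Lagrange.interpolate_apply, eval_finset_sum]
    refine Finset.sum_congr rfl fun j _ => ?_
    rw [eval_mul, eval_C]
    have hb : (Lagrange.basis Finset.univ ξ j).eval lam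
        = ∏ i ∈ Finset.univ.erase j, (lam - ξ i) / (ξ j - ξ i) := by
      rw [Lagrange.basis, eval_prod]
      refine Finset.prod_congr rfl fun i _ => ?_
      rw [Lagrange.basisDivisor]
      simp only [eval_mul, eval_C, eval_sub, eval_X]
      rw [div_eq_inv_mul]
    rw [hb]
    rw [div_eq_mul_inv, mul_comm]
  have hla2 : lam - a ≠ 0 := sub_ne_zero.mpr hla
  have hfl : f.eval lam = ((∏ j, (lam - ξ j)) - ω.eval a) / ((lam - a) * ω.eval a) := by
    have h4 := hreval lam
    have h5 : eval lam r = ((∏ j, (lam - ξ j)) - ω.eval a) / (lam - a) := by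
      rw [eq_div_iff hla2]; linear_combination -h4
    rw [hf, eval_mul, eval_C, h5, inv_mul_eq_div, div_div]
  rw [hsum, hfl, hωe a]
  have hal : a - lam ≠ 0 := sub_ne_zero.mpr (Ne.symm hla)
  have hWa : (∏ j, (a - ξ j)) ≠ 0 := by rw [← hωe a]; exact hW
  have hg : (a - lam) * (∏ j, (a - ξ j)) ≠ 0 := mul_ne_zero hal hWa
  have key : ((∏ j, (lam - ξ j)) - (∏ j, (a - ξ j))) / ((lam - a) * (∏ j, (a - ξ j)))
      = ((∏ j, (a - ξ j)) - (∏ j, (lam - ξ j))) / ((a - lam) * (∏ j, (a - ξ j))) := by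
    rw [div_eq_div_iff (mul_ne_zero hla2 hWa) hg]; ring
  rw [key, eq_div_iff hg, sub_mul, div_mul_cancel₀ _ hg]
  have hone : 1 / (a - lam) * ((a - lam) * (∏ j, (a - ξ j))) = ∏ j, (a - ξ j) := by
    field_simp
  rw [hone]; ring

set_option maxHeartbeats 1600000

/-- Tail sum estimate in the CPI error analysis: with Chebyshev interpolation points
on `(0, Λ)` and `μ_k > γΛ`, one has
`Σ_k μ_k c_k(λ)² β_k² ≤ 4 C γ² (γΛ − λ)/(γ−1)² · (1/(4(γ−1)))^{2N}`. -/
theorem stmt13 (N : ℕ) (hN : 1 ≤ N) (Λ γ : ℝ) (hΛ : 0 < Λ) (hγ : 1 < γ)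
    (ξ : Fin N → ℝ)
    (hξ : ∀ i : Fin N, ξ i = Λ / 2 * (1 + Real.cos ((2 * (i : ℝ) + 1) / (2 * N) * Real.pi)))
    (ℓ : Fin N → ℝ → ℝ)
    (hℓ : ∀ j t, ℓ j t = ∏ i ∈ Finset.univ.erase j, (t - ξ i) / (ξ j - ξ i))
    (lam : ℝ) (hlam : lam ∈ Set.Ioo 0 Λ)
    (m : ℕ) (μ : Fin m → ℝ) (hμ : ∀ k, γ * Λ < μ k)
    (β : Fin m → ℝ) (C : ℝ)
    (hβ : ∑ k, (β k / (μ k - lam)) ^ 2 ≤ C)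
    (c : Fin m → ℝ)
    (hc : ∀ k, c k = 1 / (μ k - lam) - ∑ j : Fin N, ℓ j lam / (μ k - ξ j)) :
    ∑ k, μ k * (c k) ^ 2 * (β k) ^ 2
      ≤ 4 * C * γ ^ 2 * (γ * Λ - lam) / (γ - 1) ^ 2 * (1 / (4 * (γ - 1))) ^ (2 * N) := by
  classical
  obtain ⟨hlam0, hlamΛ⟩ := hlam
  have hπ := Real.pi_pos
  have hN1 : (1:ℝ) ≤ (N:ℝ) := by exact_mod_cast hN
  have hNR : (0:ℝ) < N := by linarith
  set θ : Fin N → ℝ := fun j => (2 * (j:ℝ) + 1) / (2 * N) * Real.pi with hθdef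
  have hθpos : ∀ j, 0 < θ j := by
    intro j
    apply mul_pos _ hπ
    positivity
  have hθltπ : ∀ j, θ j < Real.pi := by
    intro j
    have h1 : (2 * (j:ℝ) + 1) / (2 * N) < 1 := by
      rw [div_lt_one (by positivity)]
      have : (j:ℝ) + 1 ≤ N := by exact_mod_cast j.2
      linarith
    calc θ j = (2 * (j:ℝ) + 1) / (2 * N) * Real.pi := rfl
      _ < 1 * Real.pi := by exact mul_lt_mul_of_pos_right h1 hπ
      _ = Real.pi := one_mul _
  have hθmem : ∀ j, θ j ∈ Set.Icc 0 Real.pi := fun j => ⟨(hθpos j).le, (hθltπ j).le⟩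
  have hcos_lt : ∀ j, Real.cos (θ j) < 1 := by
    intro j
    have := Real.strictAntiOn_cos (Set.mem_Icc.mpr ⟨le_refl 0, hπ.le⟩) (hθmem j) (hθpos j)
    rwa [Real.cos_zero] at this
  have hcos_gt : ∀ j, -1 < Real.cos (θ j) := by
    intro j
    have := Real.strictAntiOn_cos (hθmem j) (Set.mem_Icc.mpr ⟨hπ.le, le_refl _⟩) (hθltπ j)
    rwa [Real.cos_pi] at this
  have hξθ : ∀ j, ξ j = Λ / 2 * (1 + Real.cos (θ j)) := hξ
  have hξlt : ∀ j, ξ j < Λ := by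
    intro j
    rw [hξθ j]
    nlinarith [hcos_lt j]
  have hξpos : ∀ j, 0 < ξ j := by
    intro j
    rw [hξθ j]
    nlinarith [hcos_gt j]
  have hξinj : Function.Injective ξ := by
    intro i j h
    rw [hξθ i, hξθ j] at h
    have h1 : Real.cos (θ i) = Real.cos (θ j) := by
      have hΛ2 : Λ / 2 ≠ 0 := by positivity
      have := mul_left_cancel₀ hΛ2 h
      linarith
    have h2 : θ i = θ j := Real.injOn_cos (hθmem i) (hθmem j) h1
    have h3 : (2 * (i:ℝ) + 1) / (2 * N) = (2 * (j:ℝ) + 1) / (2 * N) :=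
      mul_right_cancel₀ (ne_of_gt hπ) h2
    have hne : (2 * (N:ℝ))⁻¹ ≠ 0 := by positivity
    rw [div_eq_mul_inv, div_eq_mul_inv] at h3
    have h4 : 2 * (i:ℝ) + 1 = 2 * (j:ℝ) + 1 := mul_right_cancel₀ hne h3
    have h5 : ((i:ℕ):ℝ) = ((j:ℕ):ℝ) := by linarith
    exact Fin.ext (by exact_mod_cast h5)
  -- Chebyshev bound on the node product at lam
  set s : ℝ := 2 * lam / Λ - 1 with hsdef
  have hs1 : -1 ≤ s := by
    rw [hsdef]
    have : 0 < 2 * lam / Λ := by positivity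
    linarith
  have hs2 : s ≤ 1 := by
    rw [hsdef]
    have : 2 * lam / Λ ≤ 2 := by
      rw [div_le_iff₀ hΛ]
      linarith
    linarith
  set φ : ℝ := Real.arccos s with hφdef
  have hcosφ : Real.cos φ = s := Real.cos_arccos hs1 hs2
  have hprodform : ∀ j, lam - ξ j = Λ / 2 * (Real.cos φ - Real.cos (θ j)) := by
    intro j
    rw [hξθ j, hcosφ, hsdef]
    field_simp
    ring
  have hWl : (∏ j, (lam - ξ j)) = (Λ / 2) ^ N * ∏ j, (Real.cos φ - Real.cos (θ j)) := by
    calc (∏ j, (lam - ξ j)) = ∏ j, (Λ / 2 * (Real.cos φ - Real.cos (θ j))) :=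
          Finset.prod_congr rfl fun j _ => hprodform j
      _ = (∏ _j : Fin N, (Λ / 2)) * ∏ j, (Real.cos φ - Real.cos (θ j)) :=
          Finset.prod_mul_distrib
      _ = (Λ / 2) ^ N * ∏ j, (Real.cos φ - Real.cos (θ j)) := by
          rw [Finset.prod_const, Finset.card_fin]
  have hfac : Real.cos ((N:ℝ) * φ) = 2 ^ (N - 1) * ∏ j, (Real.cos φ - Real.cos (θ j)) := by
    have h := congrArg (Polynomial.eval (Real.cos φ)) (chebFactor N hN)
    rw [Polynomial.eval_mul, Polynomial.eval_C, Polynomial.eval_prod] at h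
    simp only [Polynomial.eval_sub, Polynomial.eval_X, Polynomial.eval_C] at h
    have h2 := T_real_cos φ (N : ℤ)
    push_cast at h2
    rw [h2] at h
    exact h
  have h2N1 : (0:ℝ) < (2:ℝ) ^ (N - 1) := by positivity
  have hprodsq : (∏ j, (Real.cos φ - Real.cos (θ j))) ^ 2 ≤ (((2:ℝ) ^ (N - 1))⁻¹) ^ 2 := by
    have hpe : (∏ j, (Real.cos φ - Real.cos (θ j))) = Real.cos ((N:ℝ) * φ) / 2 ^ (N - 1) := by
      rw [eq_div_iff (ne_of_gt h2N1)]
      linarith [hfac]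
    rw [hpe, div_pow, div_eq_mul_inv, ← inv_pow]
    have hc1 : Real.cos ((N:ℝ) * φ) ^ 2 ≤ 1 := Real.cos_sq_le_one _
    nlinarith [sq_nonneg (((2:ℝ) ^ (N - 1))⁻¹)]
  have hWlsq : (∏ j, (lam - ξ j)) ^ 2 ≤ ((Λ / 2) ^ N) ^ 2 * (((2:ℝ) ^ (N - 1))⁻¹) ^ 2 := by
    rw [hWl, mul_pow]
    exact mul_le_mul_of_nonneg_left hprodsq (by positivity)
  -- setup constants
  have hγ1 : (0:ℝ) < γ - 1 := by linarith
  set X : ℝ := (1 / (4 * (γ - 1))) ^ (2 * N) with hX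
  have hXpos : 0 < X := by positivity
  set B : ℝ := 4 * γ * Λ * X with hBdef
  have hBpos : 0 < B := by positivity
  -- power identities
  set t : ℝ := (2:ℝ) ^ N with ht
  have htpos : (0:ℝ) < t := by positivity
  have ht1 : (2:ℝ) ^ (N - 1) = t / 2 := by
    rw [eq_div_iff (two_ne_zero), ht, ← pow_succ]
    congr 1
    omega
  have hQ : ((Λ / 2) ^ N) ^ 2 * (((2:ℝ) ^ (N - 1))⁻¹) ^ 2 = 4 * (Λ ^ N) ^ 2 / t ^ 4 := by
    rw [ht1, div_pow, ht]
    field_simp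
    ring
  have h44 : (4:ℝ) ^ (2 * N) = t ^ 4 := by
    rw [ht, ← pow_mul]
    rw [show (4:ℝ) = 2 ^ 2 by norm_num, ← pow_mul]
    congr 1
    omega
  have hXval : X = 1 / ((γ - 1) ^ (2 * N) * t ^ 4) := by
    rw [hX, div_pow, one_pow, mul_pow, h44]
    ring
  -- per-k bound
  have key : ∀ k, μ k * (c k) ^ 2 * (β k) ^ 2 ≤ B * (β k / (μ k - lam)) ^ 2 := by
    intro k
    have haγ : γ * Λ < μ k := hμ k
    have haΛ : Λ < μ k := by nlinarith
    have halam : 0 < μ k - lam := by linarith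
    have hμpos : 0 < μ k := by linarith
    have hμΛpos : 0 < μ k - Λ := by linarith
    have hckey : c k = (∏ j, (lam - ξ j)) / ((μ k - lam) * ∏ j, (μ k - ξ j)) := by
      rw [hc k]
      have hie := interpError N hN ξ hξinj (μ k) lam
        (fun j => ne_of_lt (lt_trans (hξlt j) haΛ)) (ne_of_lt (by linarith : lam < μ k))
      rw [← hie]
      congr 1
      refine Finset.sum_congr rfl fun j _ => ?_
      rw [hℓ j lam]
    have hWμ : (μ k - Λ) ^ N ≤ ∏ j, (μ k - ξ j) := by
      calc (μ k - Λ) ^ N = ∏ _j : Fin N, (μ k - Λ) := by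
            rw [Finset.prod_const, Finset.card_fin]
        _ ≤ ∏ j, (μ k - ξ j) :=
            Finset.prod_le_prod (fun j _ => hμΛpos.le) (fun j _ => by linarith [hξlt j])
    have hWμpos : 0 < ∏ j, (μ k - ξ j) :=
      Finset.prod_pos fun j _ => by linarith [hξlt j]
    -- core polynomial inequality
    have core : μ k * ((Λ ^ N) ^ 2 * ((γ - 1) ^ N) ^ 2)
        ≤ γ * Λ * (μ k - Λ) ^ (2 * N) := by
      have hApos : (0:ℝ) < (γ - 1) * Λ := by positivity
      have hAx : (γ - 1) * Λ ≤ μ k - Λ := by nlinarith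
      have e1 : ((γ - 1) * Λ) ^ (2 * N - 1) ≤ (μ k - Λ) ^ (2 * N - 1) :=
        pow_le_pow_left₀ hApos.le hAx _
      have e2 : μ k * ((γ - 1) * Λ) ≤ (γ * Λ) * (μ k - Λ) := by nlinarith
      have hpow : ∀ y : ℝ, y ^ (2 * N) = y ^ (2 * N - 1) * y := by
        intro y
        rw [← pow_succ]
        congr 1
        omega
      have calc1 : μ k * ((γ - 1) * Λ) ^ (2 * N) ≤ (γ * Λ) * (μ k - Λ) ^ (2 * N) := by
        calc μ k * ((γ - 1) * Λ) ^ (2 * N)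
            = (μ k * ((γ - 1) * Λ)) * ((γ - 1) * Λ) ^ (2 * N - 1) := by
              rw [hpow]; ring
          _ ≤ ((γ * Λ) * (μ k - Λ)) * (μ k - Λ) ^ (2 * N - 1) :=
              mul_le_mul e2 e1 (by positivity) (by nlinarith)
          _ = (γ * Λ) * (μ k - Λ) ^ (2 * N) := by rw [hpow]; ring
      have hA2N : ((γ - 1) * Λ) ^ (2 * N) = (Λ ^ N) ^ 2 * ((γ - 1) ^ N) ^ 2 := by
        rw [mul_pow, ← pow_mul, ← pow_mul]
        ring_nf
      rw [hA2N] at calc1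
      linarith
    -- step 4 : μ k * Q ≤ B * (μ k - Λ)^(2N)
    have hD2N : (0:ℝ) < (μ k - Λ) ^ (2 * N) := by positivity
    have step4 : μ k * (((Λ / 2) ^ N) ^ 2 * (((2:ℝ) ^ (N - 1))⁻¹) ^ 2)
        ≤ B * (μ k - Λ) ^ (2 * N) := by
      rw [hQ, hBdef, hXval]
      have lhs_eq : μ k * (4 * (Λ ^ N) ^ 2 / t ^ 4)
          = (μ k * ((Λ ^ N) ^ 2 * ((γ - 1) ^ N) ^ 2)) * (4 / ((γ - 1) ^ (2 * N) * t ^ 4)) := by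
        have hg2 : ((γ - 1) ^ N) ^ 2 = (γ - 1) ^ (2 * N) := by
          rw [← pow_mul]; ring_nf
        rw [hg2]
        field_simp
      have rhs_eq : 4 * γ * Λ * (1 / ((γ - 1) ^ (2 * N) * t ^ 4)) * (μ k - Λ) ^ (2 * N)
          = (γ * Λ * (μ k - Λ) ^ (2 * N)) * (4 / ((γ - 1) ^ (2 * N) * t ^ 4)) := by
        field_simp
      rw [lhs_eq, rhs_eq]
      exact mul_le_mul_of_nonneg_right core (by positivity)
    -- combine: μ k * Wl^2 / Wμ^2 ≤ B
    have hWμ2 : (μ k - Λ) ^ (2 * N) ≤ (∏ j, (μ k - ξ j)) ^ 2 := by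
      calc (μ k - Λ) ^ (2 * N) = ((μ k - Λ) ^ N) ^ 2 := by rw [← pow_mul]; ring_nf
        _ ≤ (∏ j, (μ k - ξ j)) ^ 2 := pow_le_pow_left₀ (by positivity) hWμ 2
    have hmain : μ k * (∏ j, (lam - ξ j)) ^ 2 / (∏ j, (μ k - ξ j)) ^ 2 ≤ B := by
      have h1 : μ k * (∏ j, (lam - ξ j)) ^ 2
          ≤ μ k * (((Λ / 2) ^ N) ^ 2 * (((2:ℝ) ^ (N - 1))⁻¹) ^ 2) :=
        mul_le_mul_of_nonneg_left hWlsq hμpos.le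
      have h2 : μ k * (∏ j, (lam - ξ j)) ^ 2 / (∏ j, (μ k - ξ j)) ^ 2
          ≤ μ k * (((Λ / 2) ^ N) ^ 2 * (((2:ℝ) ^ (N - 1))⁻¹) ^ 2) / (μ k - Λ) ^ (2 * N) :=
        div_le_div₀ (by positivity) h1 hD2N hWμ2
      have h3 : μ k * (((Λ / 2) ^ N) ^ 2 * (((2:ℝ) ^ (N - 1))⁻¹) ^ 2) / (μ k - Λ) ^ (2 * N)
          ≤ B := by
        rw [div_le_iff₀ hD2N]
        exact step4
      linarith
    -- put together
    have hWμne : (∏ j, (μ k - ξ j)) ≠ 0 := ne_of_gt hWμpos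
    have hmlne : (μ k - lam) ≠ 0 := ne_of_gt halam
    have heq : μ k * (c k) ^ 2 * (β k) ^ 2
        = (μ k * (∏ j, (lam - ξ j)) ^ 2 / (∏ j, (μ k - ξ j)) ^ 2)
          * (β k / (μ k - lam)) ^ 2 := by
      have h2 : ((μ k - lam) ^ 2) ≠ 0 := pow_ne_zero _ hmlne
      have h3 : ((∏ j, (μ k - ξ j)) ^ 2) ≠ 0 := pow_ne_zero _ hWμne
      have gen : ∀ a x b d1 d2 : ℝ, d1 ≠ 0 → d2 ≠ 0 →
          a * (x / (d1 * d2)) * b = a * x / d2 * (b / d1) := by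
        intro a x b d1 d2 h1 h2
        field_simp
      rw [hckey, div_pow, mul_pow, div_pow]
      exact gen _ _ _ _ _ h2 h3
    rw [heq]
    exact mul_le_mul_of_nonneg_right hmain (by positivity)
  -- sum up
  have hC0 : 0 ≤ C := le_trans (Finset.sum_nonneg fun k _ => by positivity) hβ
  have hsum1 : ∑ k, μ k * (c k) ^ 2 * (β k) ^ 2 ≤ B * C := by
    calc ∑ k, μ k * (c k) ^ 2 * (β k) ^ 2
        ≤ ∑ k, B * (β k / (μ k - lam)) ^ 2 :=
          Finset.sum_le_sum fun k _ => key k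
      _ = B * ∑ k, (β k / (μ k - lam)) ^ 2 := by rw [Finset.mul_sum]
      _ ≤ B * C := mul_le_mul_of_nonneg_left hβ hBpos.le
  have hfin : B * C ≤ 4 * C * γ ^ 2 * (γ * Λ - lam) / (γ - 1) ^ 2 * X := by
    have hγsq : γ * Λ * (γ - 1) ^ 2 ≤ γ ^ 2 * (γ * Λ - lam) := by nlinarith
    have hγle : γ * Λ ≤ γ ^ 2 * (γ * Λ - lam) / (γ - 1) ^ 2 := by
      rw [le_div_iff₀ (by positivity)]
      linarith
    have hBC : B * C = (γ * Λ) * (4 * C * X) := by rw [hBdef]; ring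
    have hRHS : 4 * C * γ ^ 2 * (γ * Λ - lam) / (γ - 1) ^ 2 * X
        = (γ ^ 2 * (γ * Λ - lam) / (γ - 1) ^ 2) * (4 * C * X) := by ring
    rw [hBC, hRHS]
    exact mul_le_mul_of_nonneg_right hγle (by positivity)
  calc ∑ k, μ k * (c k) ^ 2 * (β k) ^ 2 ≤ B * C := hsum1
    _ ≤ 4 * C * γ ^ 2 * (γ * Λ - lam) / (γ - 1) ^ 2 * X := hfin
    _ = 4 * C * γ ^ 2 * (γ * Λ - lam) / (γ - 1) ^ 2 * (1 / (4 * (γ - 1))) ^ (2 * N) := by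
        rw [hX]
end
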